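/- arXiv:1910.07914 — 2 statements merged into one kernel-verified Lean document; each statement's English description precedes it below -/
import Mathlib

section
/- For any two elements α, β of T_{(1,1)}, the sum α + β is not an element of the generalized root system Φ of e_8^{(n)}; consequently the subspace spanned by the corresponding generators is an abelian subalgebra. -/
/-!
Every element of `T_{(1,1)}` has height `2` under `h(x) = 2 x₁ - x₂ - x₃` (`starHeight`), the sum
of its two Magic Star coordinates `(x, k₁ - k₂)` and `(x, k₁ - k₃)`, so `h(α + β) = 4`. No root
reaches height `4`: a root `±kᵢ ± kⱼ` has entries in `[-1, 1]` with absolute values summing to `2`,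
so `h(x) ≤ |x₁| + (|x₁| + |x₂| + |x₃|) ≤ 3`, and a spinorial root has all entries `±1/2`, so
`h ≤ 2`.
-/

open Finset

/-- `kk N i` is the `i`-th vector (1-based) of the standard orthonormal basis of `ℝ^N`. -/
def kk (N i : ℕ) : Fin N → ℝ := fun j => if (j : ℕ) + 1 = i then 1 else 0

/-- The "bosonic" generalized roots `Φ_O = {±k_i ± k_j : 1 ≤ i < j ≤ N}`. -/
def PhiO (N : ℕ) : Set (Fin N → ℝ) :=
  {x | ∃ i j : ℕ, 1 ≤ i ∧ i < j ∧ j ≤ N ∧ ∃ s t : ℤ,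
      (s = 1 ∨ s = -1) ∧ (t = 1 ∨ t = -1) ∧ x = (s : ℝ) • kk N i + (t : ℝ) • kk N j}

/-- The "spinorial" generalized roots `Φ_S = {(1/2)(±k_1 ± ... ± k_N)}` with an even number of
`+` signs. -/
def PhiS (N : ℕ) : Set (Fin N → ℝ) :=
  {x | ∃ e : ℕ → ℤ, (∀ i, e i = 1 ∨ e i = -1) ∧
      Even (((Finset.Icc 1 N).filter (fun i => e i = 1)).card) ∧
      x = (1/2 : ℝ) • ∑ i ∈ Finset.Icc 1 N, (e i : ℝ) • kk N i}

/-- The set `T_{(1,1)}` of generalized roots on a tip of the Magic Star. -/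
def T11 (N : ℕ) : Set (Fin N → ℝ) :=
  {x | x = -(kk N 2) - kk N 3} ∪
  {x | ∃ i : ℕ, 4 ≤ i ∧ i ≤ N ∧ (x = kk N 1 + kk N i ∨ x = kk N 1 - kk N i)} ∪
  {x | ∃ e : ℕ → ℤ, (∀ i, e i = 1 ∨ e i = -1) ∧
      Even (((Finset.Icc 4 N).filter (fun i => e i = 1)).card) ∧
      x = (1/2 : ℝ) • (kk N 1 - kk N 2 - kk N 3 + ∑ i ∈ Finset.Icc 4 N, (e i : ℝ) • kk N i)}

variable {N : ℕ}

lemma sum_kk_le_one (i : ℕ) : ∑ m, kk N i m ≤ 1 := by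
  have hcard : #(univ.filter fun m : Fin N => (m : ℕ) + 1 = i) ≤ 1 :=
    card_le_one.2 fun a ha b hb => by
      simp only [mem_filter, mem_univ, true_and] at ha hb
      exact Fin.ext (by omega)
  simp only [kk, sum_boole]
  exact_mod_cast hcard

lemma abs_le_kk_add_kk_of_mem_PhiO {x : Fin N → ℝ} (hx : x ∈ PhiO N) :
    ∃ i j : ℕ, ∀ m, |x m| ≤ kk N i m + kk N j m := by
  obtain ⟨i, j, -, -, -, s, t, hs, ht, rfl⟩ := hx
  have hkk : ∀ (u : ℤ) (k : ℕ) (m : Fin N), (u = 1 ∨ u = -1) → |(u : ℝ) * kk N k m| = kk N k m :=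
    fun u k m hu => by rcases hu with rfl | rfl <;> simp [kk, apply_ite]
  refine ⟨i, j, fun m => ?_⟩
  calc |(s : ℝ) * kk N i m + (t : ℝ) * kk N j m|
      ≤ |(s : ℝ) * kk N i m| + |(t : ℝ) * kk N j m| := abs_add_le _ _
    _ = kk N i m + kk N j m := by rw [hkk s i m hs, hkk t j m ht]

lemma abs_apply_le_one_of_mem_PhiO {x : Fin N → ℝ} (hx : x ∈ PhiO N) (m : Fin N) :
    |x m| ≤ 1 := by
  obtain ⟨i, j, -, hij, -, s, t, hs, ht, rfl⟩ := hx
  simp only [Pi.add_apply, Pi.smul_apply, kk, smul_eq_mul, mul_ite, mul_one, mul_zero]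
  split_ifs <;> rcases hs with rfl | rfl <;> rcases ht with rfl | rfl <;> norm_num <;> omega

lemma sum_abs_le_two_of_mem_PhiO {x : Fin N → ℝ} (hx : x ∈ PhiO N) (S : Finset (Fin N)) :
    ∑ m ∈ S, |x m| ≤ 2 := by
  obtain ⟨i, j, hij⟩ := abs_le_kk_add_kk_of_mem_PhiO hx
  have hkk : ∀ k m, 0 ≤ kk N k m := fun k m => by unfold kk; split_ifs <;> norm_num
  calc ∑ m ∈ S, |x m| ≤ ∑ m ∈ S, (kk N i m + kk N j m) := sum_le_sum fun m _ => hij m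
    _ ≤ ∑ m, (kk N i m + kk N j m) :=
        sum_le_univ_sum_of_nonneg fun m => add_nonneg (hkk i m) (hkk j m)
    _ ≤ 1 + 1 := by rw [sum_add_distrib]; exact add_le_add (sum_kk_le_one i) (sum_kk_le_one j)
    _ = 2 := by norm_num

lemma sum_smul_kk_apply (a b : ℕ) (c : ℕ → ℝ) (j : Fin N) :
    (∑ i ∈ Icc a b, c i • kk N i) j = if (j : ℕ) + 1 ∈ Icc a b then c ((j : ℕ) + 1) else 0 := by
  simp only [Finset.sum_apply, Pi.smul_apply, kk, smul_eq_mul, mul_ite, mul_one, mul_zero]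
  exact sum_ite_eq (Icc a b) ((j : ℕ) + 1) c

lemma abs_eq_half_of_mem_PhiS {x : Fin N → ℝ} (hx : x ∈ PhiS N) (m : Fin N) : |x m| = 1 / 2 := by
  obtain ⟨e, he, -, rfl⟩ := hx
  have hm : (m : ℕ) + 1 ∈ Icc 1 N := mem_Icc.2 ⟨by omega, m.isLt⟩
  rw [Pi.smul_apply, sum_smul_kk_apply, if_pos hm, smul_eq_mul]
  rcases he ((m : ℕ) + 1) with h | h <;> rw [h] <;> norm_num

def starHeight (a b c : Fin N) (x : Fin N → ℝ) : ℝ := 2 * x a - x b - x c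

section starHeight

variable {a b c : Fin N} {x : Fin N → ℝ}

lemma starHeight_add (x y : Fin N → ℝ) :
    starHeight a b c (x + y) = starHeight a b c x + starHeight a b c y := by
  simp only [starHeight, Pi.add_apply]; ring

lemma starHeight_le_three_of_mem_PhiO (hab : a ≠ b) (hac : a ≠ c) (hbc : b ≠ c)
    (hx : x ∈ PhiO N) : starHeight a b c x ≤ 3 := by
  have h1 := abs_apply_le_one_of_mem_PhiO hx a
  have h3 := sum_abs_le_two_of_mem_PhiO hx {a, b, c}
  rw [sum_insert (by simp [hab, hac]), sum_pair hbc] at h3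
  unfold starHeight
  linarith [le_abs_self (x a), neg_abs_le (x b), neg_abs_le (x c)]

lemma starHeight_le_two_of_mem_PhiS (hx : x ∈ PhiS N) : starHeight a b c x ≤ 2 := by
  have h := abs_eq_half_of_mem_PhiS hx
  unfold starHeight
  linarith [le_abs_self (x a), neg_abs_le (x b), neg_abs_le (x c), h a, h b, h c]

lemma starHeight_le_three_of_mem_root (hab : a ≠ b) (hac : a ≠ c) (hbc : b ≠ c)
    (hx : x ∈ PhiO N ∪ PhiS N) : starHeight a b c x ≤ 3 := by
  rcases hx with hx | hx
  · exact starHeight_le_three_of_mem_PhiO hab hac hbc hx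
  · linarith [starHeight_le_two_of_mem_PhiS (a := a) (b := b) (c := c) hx]

lemma starHeight_eq_two_of_mem_T11 (ha : (a : ℕ) = 0) (hb : (b : ℕ) = 1) (hc : (c : ℕ) = 2)
    (hx : x ∈ T11 N) : starHeight a b c x = 2 := by
  rcases hx with (rfl | ⟨i, hi, -, hx⟩) | ⟨e, -, -, rfl⟩
  · norm_num [starHeight, kk, ha, hb, hc]
  · have : 1 ≠ i ∧ 2 ≠ i ∧ 3 ≠ i := by omega
    rcases hx with rfl | rfl <;> simp [starHeight, kk, ha, hb, hc, this]
  · norm_num [starHeight, kk, ha, hb, hc]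

end starHeight

theorem T11_sum_not_root_general (n : ℕ) (N : ℕ) (hN : N = 4 * (n + 1))
    (α β : Fin N → ℝ) (hα : α ∈ T11 N) (hβ : β ∈ T11 N) :
    α + β ∉ PhiO N ∪ PhiS N := by
  intro hroot
  let a : Fin N := ⟨0, by omega⟩
  let b : Fin N := ⟨1, by omega⟩
  let c : Fin N := ⟨2, by omega⟩
  have hle := starHeight_le_three_of_mem_root (a := a) (b := b) (c := c)
    (by simp [a, b, Fin.ext_iff]) (by simp [a, c, Fin.ext_iff]) (by simp [b, c, Fin.ext_iff]) hroot
  rw [starHeight_add, starHeight_eq_two_of_mem_T11 rfl rfl rfl hα,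
    starHeight_eq_two_of_mem_T11 rfl rfl rfl hβ] at hle
  norm_num at hle

/-- For any two elements `α, β ∈ T_{(1,1)}`, the sum `α + β` is not a generalized root of
`e_8^{(n)}`. -/
theorem T11_sum_not_root (n : ℕ) (hn : 1 ≤ n) (N : ℕ) (hN : N = 4 * (n + 1))
    (α β : Fin N → ℝ) (hα : α ∈ T11 N) (hβ : β ∈ T11 N) :
    α + β ∉ PhiO N ∪ PhiS N :=
  T11_sum_not_root_general n N hN α β hα hβ
end

section
/- Every generator x_α ∈ T with α ∉ {ρ_1, ρ_2, ρ_3} is nilpotent of order 2 for the product ∘: x_α ∘ x_α = 0. Equivalently, for α ∈ T_{(1,1)} with α ≠ k_1 ± k_N and α ≠ −k_2 − k_3, none of 2α − k_1 − k_N, 2α − k_1 + k_N, 2α + k_2 + k_3 is a generalized root. -/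
open Finset

lemma kk_apply (N i : ℕ) (j : Fin N) : kk N i j = if (j : ℕ) + 1 = i then 1 else 0 := rfl

lemma sum_kk_apply (N a : ℕ) (e : ℕ → ℤ) (j : Fin N) :
    (∑ i ∈ Finset.Icc a N, (e i : ℝ) • kk N i) j
      = if a ≤ (j : ℕ) + 1 then (e ((j : ℕ) + 1) : ℝ) else 0 := by
  have hj : (j : ℕ) + 1 ≤ N := j.isLt
  rw [Finset.sum_apply]
  have : ∀ i ∈ Finset.Icc a N, ((e i : ℝ) • kk N i) j
      = if (j : ℕ) + 1 = i then (e i : ℝ) else 0 := by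
    intro i _
    simp [kk_apply, mul_ite]
  rw [Finset.sum_congr rfl this, Finset.sum_ite_eq]
  simp [Finset.mem_Icc, hj]

lemma PhiS_coord {N : ℕ} {v : Fin N → ℝ} (hv : v ∈ PhiS N) (m : Fin N) :
    v m = 1/2 ∨ v m = -1/2 := by
  obtain ⟨e, he, -, rfl⟩ := hv
  have h := he ((m : ℕ) + 1)
  simp only [Pi.smul_apply, smul_eq_mul, sum_kk_apply, Nat.one_le_iff_ne_zero]
  rcases h with h | h <;> simp [h] <;> norm_num

lemma PhiO_coord {N : ℕ} {v : Fin N → ℝ} (hv : v ∈ PhiO N) (m : Fin N) :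
    v m = 0 ∨ v m = 1 ∨ v m = -1 := by
  obtain ⟨i, j, hi, hij, hjN, s, t, hs, ht, rfl⟩ := hv
  simp only [Pi.add_apply, Pi.smul_apply, smul_eq_mul, kk_apply]
  rcases hs with rfl | rfl <;> rcases ht with rfl | rfl <;>
    by_cases h1 : (m : ℕ) + 1 = i <;> by_cases h2 : (m : ℕ) + 1 = j <;>
    simp [h1, h2] <;> omega

lemma PhiO_support {N : ℕ} {v : Fin N → ℝ} (hv : v ∈ PhiO N) (m1 m2 m3 : Fin N)
    (h12 : (m1 : ℕ) ≠ m2) (h13 : (m1 : ℕ) ≠ m3) (h23 : (m2 : ℕ) ≠ m3) :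
    v m1 = 0 ∨ v m2 = 0 ∨ v m3 = 0 := by
  obtain ⟨i, j, hi, hij, hjN, s, t, hs, ht, rfl⟩ := hv
  have key : ∀ m : Fin N, (m : ℕ) + 1 ≠ i → (m : ℕ) + 1 ≠ j →
      ((s : ℝ) • kk N i + (t : ℝ) • kk N j) m = 0 := by
    intro m hmi hmj
    simp [kk_apply, hmi, hmj]
  by_cases a1 : (m1 : ℕ) + 1 = i ∨ (m1 : ℕ) + 1 = j
  · by_cases a2 : (m2 : ℕ) + 1 = i ∨ (m2 : ℕ) + 1 = j
    · by_cases a3 : (m3 : ℕ) + 1 = i ∨ (m3 : ℕ) + 1 = j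
      · exfalso; omega
      · push_neg at a3; exact Or.inr (Or.inr (key _ a3.1 a3.2))
    · push_neg at a2; exact Or.inr (Or.inl (key _ a2.1 a2.2))
  · push_neg at a1; exact Or.inl (key _ a1.1 a1.2)

lemma not_root_of_coord_two {N : ℕ} {v : Fin N → ℝ} (m : Fin N)
    (h : v m = 2 ∨ v m = -2) : v ∉ PhiO N ∪ PhiS N := by
  rintro (hv | hv)
  · rcases PhiO_coord hv m with h' | h' | h' <;> rcases h with h | h <;>
      rw [h] at h' <;> norm_num at h'
  · rcases PhiS_coord hv m with h' | h' <;> rcases h with h | h <;>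
      rw [h] at h' <;> norm_num at h'

lemma not_root_of_three {N : ℕ} {v : Fin N → ℝ} (m1 m2 m3 : Fin N)
    (h12 : (m1 : ℕ) ≠ m2) (h13 : (m1 : ℕ) ≠ m3) (h23 : (m2 : ℕ) ≠ m3)
    (hv1 : v m1 = 1 ∨ v m1 = -1) (hv2 : v m2 = 1 ∨ v m2 = -1)
    (hv3 : v m3 = 1 ∨ v m3 = -1) : v ∉ PhiO N ∪ PhiS N := by
  rintro (hv | hv)
  · rcases PhiO_support hv m1 m2 m3 h12 h13 h23 with h | h | h
    · rcases hv1 with h' | h' <;> rw [h'] at h <;> norm_num at h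
    · rcases hv2 with h' | h' <;> rw [h'] at h <;> norm_num at h
    · rcases hv3 with h' | h' <;> rw [h'] at h <;> norm_num at h
  · rcases PhiS_coord hv m1 with h | h <;> rcases hv1 with h' | h' <;>
      rw [h'] at h <;> norm_num at h

/-- For `α ∈ T_{(1,1)}` different from `ρ_1 = k_1+k_N`, `ρ_2 = k_1−k_N`, `ρ_3 = −k_2−k_3`,
none of `2α − k_1 − k_N`, `2α − k_1 + k_N`, `2α + k_2 + k_3` is a generalized root; hence
the corresponding generator `x_α` is nilpotent of order 2 for the product `∘`. -/
theorem T11_generators_nilpotent (n : ℕ) (hn : 1 ≤ n) (N : ℕ) (hN : N = 4 * (n + 1))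
    (α : Fin N → ℝ) (hα : α ∈ T11 N)
    (h1 : α ≠ kk N 1 + kk N N) (h2 : α ≠ kk N 1 - kk N N) (h3 : α ≠ -(kk N 2) - kk N 3) :
    (2 : ℝ) • α - kk N 1 - kk N N ∉ PhiO N ∪ PhiS N ∧
    (2 : ℝ) • α - kk N 1 + kk N N ∉ PhiO N ∪ PhiS N ∧
    (2 : ℝ) • α + kk N 2 + kk N 3 ∉ PhiO N ∪ PhiS N := by
  have hN8 : 8 ≤ N := by omega
  rcases hα with (hc | ⟨i, hi4, hiN, hpm⟩) | ⟨e, he, -, hsp⟩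
  · exact absurd hc h3
  · -- bosonic case: α = kk 1 ± kk i
    have hiN' : i < N := by
      rcases lt_or_eq_of_le hiN with h | rfl
      · exact h
      · exfalso; rcases hpm with rfl | rfl
        · exact h1 rfl
        · exact h2 rfl
    have hmlt : i - 1 < N := by omega
    set m : Fin N := ⟨i - 1, hmlt⟩ with hm
    have hmv : (m : ℕ) = i - 1 := rfl
    have ei : kk N i m = 1 := by rw [kk_apply, if_pos]; show i - 1 + 1 = i; omega
    have e1 : kk N 1 m = 0 := by rw [kk_apply, if_neg]; show ¬(i - 1 + 1 = 1); omega
    have eN : kk N N m = 0 := by rw [kk_apply, if_neg]; show ¬(i - 1 + 1 = N); omega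
    have z0 : (0:ℕ) < N := by omega
    set m0 : Fin N := ⟨0, z0⟩ with hm0
    have f1 : kk N 1 m0 = 1 := by rw [kk_apply, if_pos]; rfl
    have fi : kk N i m0 = 0 := by rw [kk_apply, if_neg]; show ¬(0 + 1 = i); omega
    have f2 : kk N 2 m0 = 0 := by rw [kk_apply, if_neg]; show ¬(0 + 1 = 2); omega
    have f3 : kk N 3 m0 = 0 := by rw [kk_apply, if_neg]; show ¬(0 + 1 = 3); omega
    rcases hpm with rfl | rfl
    · refine ⟨not_root_of_coord_two m ?_, not_root_of_coord_two m ?_,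
        not_root_of_coord_two m0 ?_⟩ <;>
        simp [Pi.sub_apply, Pi.add_apply, Pi.smul_apply, smul_eq_mul,
          ei, e1, eN, f1, fi, f2, f3]
    · refine ⟨not_root_of_coord_two m ?_, not_root_of_coord_two m ?_,
        not_root_of_coord_two m0 ?_⟩ <;>
        simp [Pi.sub_apply, Pi.add_apply, Pi.smul_apply, smul_eq_mul,
          ei, e1, eN, f1, fi, f2, f3]
  · -- spinor case
    subst hsp
    have z0 : (0:ℕ) < N := by omega
    have z1 : (1:ℕ) < N := by omega
    have z2 : (2:ℕ) < N := by omega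
    have z3 : (3:ℕ) < N := by omega
    have z4 : (4:ℕ) < N := by omega
    set m0 : Fin N := ⟨0, z0⟩
    set m2 : Fin N := ⟨1, z1⟩
    set m3 : Fin N := ⟨2, z2⟩
    set m4 : Fin N := ⟨3, z3⟩
    set m5 : Fin N := ⟨4, z4⟩
    set S := ∑ i ∈ Finset.Icc 4 N, (e i : ℝ) • kk N i with hS
    have kkv : ∀ c : ℕ, ∀ j : ℕ, ∀ h : c < N,
        kk N j ⟨c, h⟩ = if c + 1 = j then 1 else 0 := fun _ _ _ => rfl
    have Sv : ∀ c : ℕ, ∀ h : c < N,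
        S ⟨c, h⟩ = if 4 ≤ c + 1 then (e (c + 1) : ℝ) else 0 := fun c h =>
      sum_kk_apply N 4 e ⟨c, h⟩
    have e4 : (e 4 : ℝ) = 1 ∨ (e 4 : ℝ) = -1 := by
      rcases he 4 with h | h <;> simp [h]
    have e5 : (e 5 : ℝ) = 1 ∨ (e 5 : ℝ) = -1 := by
      rcases he 5 with h | h <;> simp [h]
    refine ⟨not_root_of_three m2 m3 m4 (by simp [m0, m2, m3, m4, m5]) (by simp [m0, m2, m3, m4, m5]) (by simp [m0, m2, m3, m4, m5]) ?_ ?_ ?_,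
      not_root_of_three m2 m3 m4 (by simp [m0, m2, m3, m4, m5]) (by simp [m0, m2, m3, m4, m5]) (by simp [m0, m2, m3, m4, m5]) ?_ ?_ ?_,
      not_root_of_three m0 m4 m5 (by simp [m0, m2, m3, m4, m5]) (by simp [m0, m2, m3, m4, m5]) (by simp [m0, m2, m3, m4, m5]) ?_ ?_ ?_⟩ <;>
      simp only [Pi.sub_apply, Pi.add_apply, Pi.smul_apply, smul_eq_mul,
        kkv, Sv] <;>
      norm_num <;>
      first
        | omega
        | exact e4
        | exact e5
        | (rcases e4 with h | h <;> rw [h] <;> norm_num <;>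
              first | (exact Or.inl (by omega)) | (exact Or.inr (by omega)) | skip)
        | (rcases e5 with h | h <;> rw [h] <;> norm_num <;>
              first | (exact Or.inl (by omega)) | (exact Or.inr (by omega)) | skip)
        | (rw [if_neg (by omega)] <;> norm_num <;>
            first
              | exact e4
              | exact e5
              | (rcases e4 with h | h <;> rw [h] <;> norm_num <;>
              first | (exact Or.inl (by omega)) | (exact Or.inr (by omega)) | skip)
              | (rcases e5 with h | h <;> rw [h] <;> norm_num <;>
              first | (exact Or.inl (by omega)) | (exact Or.inr (by omega)) | skip)
              | omega
              | skip)
        | skip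
end
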